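/- arXiv:1907.05436 — 2 statements merged into one kernel-verified Lean document; each statement's English description precedes it below -/
import Mathlib

section
/- Let F : ℤ → ℂ satisfy F(n) = -1/(2|n|) for n ≠ 0 and F(0) = -log 2, and let ω be the forward difference operator (ωF)(n) = F(n+1) - F(n). Then for each j ≥ 0 there exists c_j > 0 such that |ω^j F(n)| ≤ c_j · (max(|n|,1))^{-1-j} for all n ∈ ℤ. -/
/-!
On a window `n, n + 1, …, n + j` that avoids `0`, `F` agrees with `m ↦ a / m` for `a = ∓1/2`, and
`ω^j (a / m)` at `n` is `(-1)^j j! a / (n (n + 1) ⋯ (n + j))`, the discrete analogue of the `j`-th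
derivative of `1 / x`. When `|n| > 2j` every factor of that product exceeds `|n| / 2`, which gives
the bound with constant `j! 2^j`; the finitely many remaining `n` only enlarge the constant.
-/

/-- The forward difference operator on sequences indexed by `ℤ`. -/
def fwdDiffZ (F : ℤ → ℂ) : ℤ → ℂ := fun n => F (n + 1) - F n

open Finset Asymptotics Filter
open scoped Nat

lemma fwdDiffZ_iterate_congr {F G : ℤ → ℂ} {j : ℕ} {n : ℤ}
    (h : ∀ i ≤ j, F (n + i) = G (n + i)) : fwdDiffZ^[j] F n = fwdDiffZ^[j] G n := by
  change (fwdDiff 1)^[j] F n = (fwdDiff 1)^[j] G n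
  simp only [fwdDiff_iter_eq_sum_shift, nsmul_one]
  refine sum_congr rfl fun i hi => ?_
  rw [h i (Nat.lt_succ_iff.mp (mem_range.mp hi))]

lemma fwdDiffZ_iterate_div (a : ℂ) (j : ℕ) (n : ℤ) (h : ∀ i ≤ j, (n : ℂ) + i ≠ 0) :
    fwdDiffZ^[j] (fun m : ℤ => a / m) n
      = (-1) ^ j * j ! * a / ∏ i ∈ range (j + 1), ((n : ℂ) + i) := by
  induction j generalizing n with
  | zero => simp
  | succ j ih =>
    have h_succ : ∀ i ≤ j, ((n + 1 : ℤ) : ℂ) + i ≠ 0 := fun i hi => by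
      simpa [add_assoc, add_comm (1 : ℂ)] using h (i + 1) (by omega)
    rw [Function.iterate_succ_apply']
    change fwdDiffZ^[j] _ (n + 1) - fwdDiffZ^[j] _ n = _
    rw [ih (n + 1) h_succ, ih n fun i hi => h i (by omega)]
    set P := ∏ i ∈ range (j + 1), ((n : ℂ) + i)
    set Q := ∏ i ∈ range (j + 1), (((n + 1 : ℤ) : ℂ) + i)
    have h_shift : Q * n = P * (n + (j + 1 : ℕ)) := by
      rw [← prod_range_succ, prod_range_succ', Nat.cast_zero, add_zero]
      exact congrArg (· * _) (prod_congr rfl fun i _ => by push_cast; ring)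
    have hP : P ≠ 0 := prod_ne_zero_iff.mpr fun i hi => h i (by simp at hi; omega)
    have hQ : Q ≠ 0 := prod_ne_zero_iff.mpr fun i hi => h_succ i (by simp at hi; omega)
    have hnj : (n : ℂ) + (j + 1 : ℕ) ≠ 0 := h (j + 1) le_rfl
    rw [prod_range_succ, Nat.factorial_succ, div_sub_div _ _ hQ hP, div_eq_div_iff (mul_ne_zero hQ hP) (mul_ne_zero hP hnj)]
    push_cast at h_shift ⊢
    linear_combination -((-1) ^ j * j ! * a) * P * h_shift

lemma pow_half_abs_le_prod_abs_add (x : ℝ) (j : ℕ) (hx : 2 * j ≤ |x|) :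
    (|x| / 2) ^ (j + 1) ≤ ∏ i ∈ range (j + 1), |x + i| := by
  rw [pow_eq_prod_const]
  refine prod_le_prod (fun _ _ => by positivity) fun i hi => ?_
  have hij : (i : ℝ) ≤ j := by exact_mod_cast Nat.lt_succ_iff.mp (mem_range.mp hi)
  have := abs_sub_abs_le_abs_add x i
  rw [Nat.abs_cast] at this
  linarith

lemma exists_eq_div_of_lt_abs {F : ℤ → ℂ} (hF : ∀ n : ℤ, n ≠ 0 → F n = -(1 / (2 * |(n : ℝ)|)))
    {j : ℕ} {n : ℤ} (hn : j < |n|) :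
    ∃ a : ℂ, ‖a‖ = 1 / 2 ∧ ∀ i ≤ j, (n : ℂ) + i ≠ 0 ∧ F (n + i) = a / ((n : ℂ) + i) := by
  rcases lt_abs.mp hn with hpos | hneg
  · refine ⟨-1 / 2, by norm_num, fun i _ => ?_⟩
    have hm : (0 : ℝ) < n + i := by exact_mod_cast (by omega : (0 : ℤ) < n + i)
    refine ⟨by exact_mod_cast hm.ne', ?_⟩
    rw [hF _ (by omega), Int.cast_add, Int.cast_natCast, abs_of_pos hm]
    push_cast
    rw [div_div, neg_div]
  · refine ⟨1 / 2, by norm_num, fun i hi => ?_⟩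
    have hm : (n : ℝ) + i < 0 := by exact_mod_cast (by omega : n + i < (0 : ℤ))
    refine ⟨by exact_mod_cast hm.ne, ?_⟩
    rw [hF _ (by omega), Int.cast_add, Int.cast_natCast, abs_of_neg hm]
    push_cast
    rw [div_div, mul_neg, div_neg, neg_neg]

lemma norm_fwdDiffZ_iterate_le {F : ℤ → ℂ}
    (hF : ∀ n : ℤ, n ≠ 0 → F n = -(1 / (2 * |(n : ℝ)|))) {j : ℕ} {n : ℤ} (hn : 2 * j < |n|) :
    ‖fwdDiffZ^[j] F n‖ ≤ j ! * 2 ^ j * max |(n : ℝ)| 1 ^ (-(1 : ℝ) - j) := by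
  obtain ⟨a, ha, hwindow⟩ := exists_eq_div_of_lt_abs hF (j := j) (n := n) (by omega)
  have hn_real : 2 * (j : ℝ) < |(n : ℝ)| := by rw [← Int.cast_abs]; exact_mod_cast hn
  have hn_one : 1 ≤ |(n : ℝ)| := by rw [← Int.cast_abs]; exact_mod_cast (by omega : 1 ≤ |n|)
  have hprod := pow_half_abs_le_prod_abs_add n j hn_real.le
  rw [fwdDiffZ_iterate_congr (G := fun m : ℤ => a / m) fun i hi => by simpa using (hwindow i hi).2,
    fwdDiffZ_iterate_div a j n fun i hi => (hwindow i hi).1, max_eq_left hn_one,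
    show -(1 : ℝ) - j = -((j + 1 : ℕ) : ℝ) by push_cast; ring, Real.rpow_neg (by positivity),
    Real.rpow_natCast]
  have hnorm (i : ℕ) : ‖(n : ℂ) + i‖ = |(n : ℝ) + i| := by
    rw [← Real.norm_eq_abs, ← Complex.norm_real]; push_cast; rfl
  simp only [norm_div, norm_mul, norm_pow, norm_neg, norm_one, one_pow, one_mul,
    Complex.norm_natCast, ha, norm_prod, hnorm]
  calc (j ! : ℝ) * (1 / 2) / ∏ i ∈ range (j + 1), |(n : ℝ) + i|
      ≤ j ! * (1 / 2) / (|(n : ℝ)| / 2) ^ (j + 1) := by gcongr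
    _ = j ! * 2 ^ j * (|(n : ℝ)| ^ (j + 1))⁻¹ := by rw [div_pow]; field_simp; ring

theorem difference_decay_general (F : ℤ → ℂ)
    (hF : ∀ n : ℤ, n ≠ 0 → F n = -(1 / (2 * |(n : ℝ)|))) :
    ∀ j : ℕ, ∃ c : ℝ, 0 < c ∧ ∀ n : ℤ,
      ‖(fwdDiffZ^[j] F) n‖ ≤
        c * (max |(n : ℝ)| 1) ^ (-(1 : ℝ) - (j : ℝ)) := by
  intro j
  have hweight (n : ℤ) : 0 < max |(n : ℝ)| 1 ^ (-(1 : ℝ) - j) :=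
    Real.rpow_pos_of_pos (lt_max_of_lt_right one_pos) _
  have h_far : ∀ᶠ n : ℤ in cofinite, 2 * (j : ℤ) < |n| :=
    eventually_cofinite.2 <| (Set.finite_Icc (-(2 * j : ℤ)) (2 * j)).subset fun n hn => by
      simpa [abs_le] using hn
  have h_bigO : fwdDiffZ^[j] F =O[cofinite] fun n : ℤ => max |(n : ℝ)| 1 ^ (-(1 : ℝ) - j) :=
    IsBigO.of_bound (j ! * 2 ^ j) <| h_far.mono fun n hn => by
      rw [Real.norm_of_nonneg (hweight n).le]
      exact norm_fwdDiffZ_iterate_le hF hn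
  obtain ⟨c, hc, hbound⟩ := bound_of_isBigO_cofinite h_bigO
  exact ⟨c, hc, fun n => (hbound (hweight n).ne').trans_eq <| by
    rw [Real.norm_of_nonneg (hweight n).le]⟩

theorem difference_decay (F : ℤ → ℂ)
    (hF0 : F 0 = -Real.log 2)
    (hF : ∀ n : ℤ, n ≠ 0 → F n = -(1 / (2 * |(n : ℝ)|))) :
    ∀ j : ℕ, ∃ c : ℝ, 0 < c ∧ ∀ n : ℤ,
      ‖(fwdDiffZ^[j] F) n‖ ≤
        c * (max |(n : ℝ)| 1) ^ (-(1 : ℝ) - (j : ℝ)) :=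
  difference_decay_general F hF
end

section
/- Let m, z ∈ ℂ and x ∈ ℝ² \ {0}. The matrix-valued function φ_z(x) = (i√(m²-z²)/(2π)) K_1(√(m²-z²)|x|) (σ·x/|x|) + (1/(2π)) K_0(√(m²-z²)|x|)(m σ_3 + z σ_0) satisfies the symmetry φ_{z̄}(x-y)* = φ_z(y-x) for all x ≠ y, where * denotes the conjugate transpose, provided m ∈ ℝ. -/
open Matrix Real

noncomputable def sigma1 : Matrix (Fin 2) (Fin 2) ℂ := !![0, 1; 1, 0]
noncomputable def sigma2 : Matrix (Fin 2) (Fin 2) ℂ := !![0, -Complex.I; Complex.I, 0]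
noncomputable def sigma3 : Matrix (Fin 2) (Fin 2) ℂ := !![1, 0; 0, -1]

/-- Modified Bessel function of the second kind of order `ν` for complex argument,
via the integral representation `K_ν(z) = ∫₀^∞ exp(-z cosh s) cosh(ν s) ds`. -/
noncomputable def besselK (ν : ℕ) (z : ℂ) : ℂ :=
  ∫ s in Set.Ioi (0 : ℝ), Complex.exp (-z * Real.cosh s) * (Real.cosh (ν * s) : ℂ)

/-- The Euclidean norm on `ℝ × ℝ`. -/
noncomputable def nrm (x : ℝ × ℝ) : ℝ := Real.sqrt (x.1 ^ 2 + x.2 ^ 2)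

/-- The Green function `φ_z` of the free two-dimensional Dirac operator. -/
noncomputable def phiGreen (m : ℝ) (z : ℂ) (x : ℝ × ℝ) : Matrix (Fin 2) (Fin 2) ℂ :=
  letI s : ℂ := ((m : ℂ) ^ 2 - z ^ 2) ^ ((1 : ℂ) / 2)
  (Complex.I * s / (2 * (π : ℂ)) * besselK 1 (s * (nrm x : ℂ))) •
      (((x.1 / nrm x : ℝ) : ℂ) • sigma1 + ((x.2 / nrm x : ℝ) : ℂ) • sigma2) +
    ((1 : ℂ) / (2 * (π : ℂ)) * besselK 0 (s * (nrm x : ℂ))) •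
      ((m : ℂ) • sigma3 + z • (1 : Matrix (Fin 2) (Fin 2) ℂ))

/-! The principal square root and the real integral defining `K_ν` both commute with complex
conjugation (the former because `m² - z²` avoids the branch cut), and the Pauli matrices are
Hermitian. Taking the adjoint therefore only conjugates the scalar coefficients; the sign flip
of `i` in the `σ·x` term is undone by the reflection `x - y ↦ y - x`. -/

open ComplexConjugate

lemma besselK_conj (ν : ℕ) (w : ℂ) : besselK ν (conj w) = conj (besselK ν w) := by
  rw [besselK, besselK, ← integral_conj]
  congr 1 with s
  simp only [map_mul, map_neg, Complex.conj_ofReal, ← Complex.exp_conj]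

lemma sigma1_isHermitian : sigma1.IsHermitian := by
  ext i j; fin_cases i <;> fin_cases j <;> simp [sigma1]

lemma sigma2_isHermitian : sigma2.IsHermitian := by
  ext i j; fin_cases i <;> fin_cases j <;> simp [sigma2]

lemma sigma3_isHermitian : sigma3.IsHermitian := by
  ext i j; fin_cases i <;> fin_cases j <;> simp [sigma3]

lemma nrm_neg (v : ℝ × ℝ) : nrm (-v) = nrm v := by
  simp [nrm]

lemma Complex.arg_ne_pi_of_ne_ofReal_nonpos {w : ℂ} (hw : ∀ r : ℝ, r ≤ 0 → w ≠ r) :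
    w.arg ≠ π := by
  intro h
  obtain ⟨hre, him⟩ := Complex.arg_eq_pi_iff.mp h
  exact hw w.re hre.le (Complex.ext rfl (by simpa using him))

lemma Complex.conj_cpow_half {w : ℂ} (hw : w.arg ≠ π) :
    conj w ^ (1 / 2 : ℂ) = conj (w ^ (1 / 2 : ℂ)) := by
  rw [Complex.conj_cpow _ _ hw, map_div₀, map_one, map_ofNat]

lemma phiGreen_conj_neg_conjTranspose (m : ℝ) {z : ℂ} (hz : ((m : ℂ) ^ 2 - z ^ 2).arg ≠ π)
    (v : ℝ × ℝ) : (phiGreen m (conj z) (-v))ᴴ = phiGreen m z v := by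
  have hs : (m : ℂ) ^ 2 - conj z ^ 2 = conj ((m : ℂ) ^ 2 - z ^ 2) := by
    simp
  simp only [phiGreen, hs, Complex.conj_cpow_half hz, nrm_neg]
  set s : ℂ := ((m : ℂ) ^ 2 - z ^ 2) ^ ((1 : ℂ) / 2)
  have hK (ν : ℕ) : besselK ν (conj s * (nrm v : ℂ)) = conj (besselK ν (s * (nrm v : ℂ))) := by
    rw [← besselK_conj, map_mul, Complex.conj_ofReal]
  simp only [hK, conjTranspose_add, conjTranspose_smul, conjTranspose_one,
    sigma1_isHermitian.eq, sigma2_isHermitian.eq, sigma3_isHermitian.eq, Prod.fst_neg,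
    Prod.snd_neg, neg_div, Complex.ofReal_neg, Complex.star_def, map_mul, map_div₀,
    Complex.conj_I, Complex.conj_conj, Complex.conj_ofReal, map_one, map_ofNat, map_neg]
  module

theorem phiGreen_symmetry (m : ℝ) (z : ℂ)
    (hz : ∀ r : ℝ, r ≤ 0 → (m : ℂ) ^ 2 - z ^ 2 ≠ (r : ℂ)) :
    ∀ x y : ℝ × ℝ, x ≠ y →
      (phiGreen m ((starRingEnd ℂ) z) (x - y)).conjTranspose =
        phiGreen m z (y - x) := by
  intro x y _
  rw [← neg_sub y x]
  exact phiGreen_conj_neg_conjTranspose m (Complex.arg_ne_pi_of_ne_ofReal_nonpos hz) (y - x)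
end
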